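/- arXiv:2003.06682 — 5 statements merged into one kernel-verified Lean document; each statement's English description precedes it below -/
import Mathlib

section
/- Let C ⊂ ℝ³ be a convex body. Then the set Ext C \ closure(Sing C) has no isolated points: for every ξ in this set and every ε > 0, the punctured ball B_ε(ξ) \ {ξ} contains another point of Ext C \ closure(Sing C). -/
/-! If `ξ` were isolated in `Ext C \ closure (Sing C)`, then near `ξ` the only extreme point of `C`
would be `ξ` itself. By Krein–Milman, `C` then lies in the closed convex hull of `ξ` and the
compact set `C \ B_r(ξ)`, whose convex hull is compact (Carathéodory) and misses `ξ` because `ξ`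
is extreme. Strictly separating `ξ` from that hull gives a unit vector `u` such that every vector
near `u` is an outward normal at `ξ`; since the unit sphere of `ℝ³` has no isolated points, `ξ`
has two distinct unit normals, so `ξ ∈ Sing C`. -/

open Set Metric

noncomputable section

/-- The space `ℝ³`. -/
abbrev E3 : Type := EuclideanSpace ℝ (Fin 3)

/-- A convex body in `ℝ³`: a compact convex set with nonempty interior. -/
def IsConvexBody (C : Set E3) : Prop :=
  IsCompact C ∧ Convex ℝ C ∧ (interior C).Nonempty

/-- `n` is an outward unit normal to the set `C` at the point `ξ`. -/
def IsOutwardNormal (C : Set E3) (ξ n : E3) : Prop :=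
  ‖n‖ = 1 ∧ ∀ x ∈ C, (inner ℝ (x - ξ) n : ℝ) ≤ 0

/-- The singular points of the boundary of `C`: boundary points with at least two distinct
outward unit normals. -/
def SingPts (C : Set E3) : Set E3 :=
  {ξ | ξ ∈ frontier C ∧
    ∃ n₁ n₂ : E3, n₁ ≠ n₂ ∧ IsOutwardNormal C ξ n₁ ∧ IsOutwardNormal C ξ n₂}

open Filter Topology
open scoped RealInnerProductSpace

theorem isCompact_convexHull {E : Type*} [NormedAddCommGroup E] [NormedSpace ℝ E]
    [FiniteDimensional ℝ E] {s : Set E} (hs : IsCompact s) : IsCompact (convexHull ℝ s) := by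
  rcases s.eq_empty_or_nonempty with rfl | ⟨a, ha⟩
  · simp
  set n := Module.finrank ℝ E + 1
  suffices convexHull ℝ s = (fun p : (Fin n → ℝ) × (Fin n → E) ↦ ∑ i, p.1 i • p.2 i) ''
      (stdSimplex ℝ (Fin n) ×ˢ univ.pi fun _ ↦ s) from
    this ▸ ((isCompact_stdSimplex ℝ (Fin n)).prod (isCompact_univ_pi fun _ ↦ hs)).image
      (by fun_prop)
  refine Subset.antisymm (fun x hx ↦ ?_) ?_
  · obtain ⟨ι, _, z, w, hzs, hz, hw0, hw1, rfl⟩ := eq_pos_convex_span_of_mem_convexHull hx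
    -- Carathéodory: at most `finrank + 1` points are needed; pad with copies of `a` of weight 0.
    have hcard : Fintype.card (ι ⊕ Fin (n - Fintype.card ι)) = Fintype.card (Fin n) := by
      have := hz.card_le_finrank_succ.trans (Nat.succ_le_succ (Submodule.finrank_le _))
      simp only [Fintype.card_sum, Fintype.card_fin]
      omega
    let σ := (Fintype.equivOfCardEq hcard).symm
    refine ⟨(Sum.elim w 0 ∘ σ, Sum.elim z (fun _ ↦ a) ∘ σ),
      ⟨⟨fun j ↦ ?_, ?_⟩, fun j _ ↦ ?_⟩, ?_⟩
    · change 0 ≤ Sum.elim w 0 (σ j)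
      rcases σ j with i | i
      exacts [(hw0 i).le, le_rfl]
    · simp [Equiv.sum_comp σ (Sum.elim w 0), hw1]
    · change Sum.elim z (fun _ ↦ a) (σ j) ∈ s
      rcases σ j with i | i
      exacts [hzs (mem_range_self i), ha]
    · simp [Equiv.sum_comp σ fun p ↦ Sum.elim w 0 p • Sum.elim z (fun _ ↦ a) p]
  · rintro _ ⟨⟨w, z⟩, ⟨hw, hz⟩, rfl⟩
    exact (convex_convexHull ℝ s).sum_mem (fun i _ ↦ hw.1 i) hw.2
      fun i _ ↦ subset_convexHull ℝ s (hz i (mem_univ i))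

section InnerProductSpace

variable {E : Type*} [NormedAddCommGroup E] [InnerProductSpace ℝ E]

theorem exists_norm_eq_one_forall_inner_sub_le_neg [CompleteSpace E] [Nontrivial E]
    {K : Set E} {ξ : E} (hKc : IsCompact K) (hKv : Convex ℝ K) (hξ : ξ ∉ K) :
    ∃ u : E, ‖u‖ = 1 ∧ ∃ δ > 0, ∀ k ∈ K, ⟪k - ξ, u⟫ ≤ -δ := by
  rcases K.eq_empty_or_nonempty with rfl | ⟨k₀, hk₀⟩
  · obtain ⟨u, hu⟩ := exists_norm_eq E zero_le_one
    exact ⟨u, hu, 1, one_pos, by simp⟩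
  obtain ⟨f, c, hfK, hfξ⟩ := geometric_hahn_banach_closed_point hKv hKc.isClosed hξ
  set v := (InnerProductSpace.toDual ℝ E).symm f
  have hv : ∀ x, ⟪v, x⟫ = f x := fun _ ↦ InnerProductSpace.toDual_symm_apply
  have hgap : 0 < f ξ - c := sub_pos.mpr hfξ
  have hv0 : 0 < ‖v‖ := norm_pos_iff.mpr fun h ↦ by
    have := hfK k₀ hk₀
    simp only [← hv, h, inner_zero_left] at this hfξ
    linarith
  refine ⟨‖v‖⁻¹ • v, by simp [norm_smul, hv0.ne'], ‖v‖⁻¹ * (f ξ - c), by positivity,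
    fun k hk ↦ ?_⟩
  rw [real_inner_smul_right, real_inner_comm, inner_sub_right, hv, hv, ← mul_neg]
  exact mul_le_mul_of_nonneg_left (by linarith [hfK k hk]) (by positivity)

theorem inner_sub_nonpos_of_forall_extremePoints {C : Set E} {ξ n : E} (hCc : IsCompact C)
    (hCv : Convex ℝ C) (h : ∀ η ∈ extremePoints ℝ C, ⟪η - ξ, n⟫ ≤ 0) :
    ∀ x ∈ C, ⟪x - ξ, n⟫ ≤ 0 := by
  have hH : Convex ℝ {x : E | ⟪x - ξ, n⟫ ≤ 0} := by
    simp_rw [inner_sub_left, sub_nonpos]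
    exact convex_halfSpace_le
      ⟨fun x y ↦ inner_add_left x y n, fun c x ↦ real_inner_smul_left x n c⟩ _
  have hH' : IsClosed {x : E | ⟪x - ξ, n⟫ ≤ 0} :=
    isClosed_le (f := fun x ↦ ⟪x - ξ, n⟫) (by fun_prop) continuous_const
  rw [← closure_convexHull_extremePoints hCc hCv]
  exact closure_minimal (convexHull_min h hH) hH'

theorem exists_norm_eq_one_eventually_inner_sub_nonpos [FiniteDimensional ℝ E] [Nontrivial E]
    {C : Set E} {ξ : E} {r : ℝ} (hCc : IsCompact C) (hCv : Convex ℝ C)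
    (hξ : ξ ∈ extremePoints ℝ C) (hr : 0 < r) (hiso : extremePoints ℝ C ∩ ball ξ r ⊆ {ξ}) :
    ∃ u : E, ‖u‖ = 1 ∧ ∀ᶠ n in 𝓝 u, ∀ x ∈ C, ⟪x - ξ, n⟫ ≤ 0 := by
  have hA : IsCompact (C \ ball ξ r) := hCc.diff isOpen_ball
  have hξA : ξ ∉ convexHull ℝ (C \ ball ξ r) := fun h ↦
    have hext : ξ ∈ extremePoints ℝ (convexHull ℝ (C \ ball ξ r)) :=
      inter_extremePoints_subset_extremePoints_of_subset
        (convexHull_min sdiff_subset hCv) ⟨h, hξ⟩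
    (extremePoints_convexHull_subset hext).2 (mem_ball_self hr)
  obtain ⟨u, hu, δ, hδ, huA⟩ := exists_norm_eq_one_forall_inner_sub_le_neg
    (isCompact_convexHull hA) (convex_convexHull ℝ _) hξA
  obtain ⟨R, hR⟩ := hCc.isBounded.subset_closedBall ξ
  have hlim : Tendsto (fun n ↦ R * ‖n - u‖) (𝓝 u) (𝓝 0) := by
    have : Continuous fun n : E ↦ R * ‖n - u‖ := by fun_prop
    simpa using this.tendsto u
  refine ⟨u, hu, (hlim.eventually_lt_const hδ).mono fun n hn ↦ ?_⟩
  refine inner_sub_nonpos_of_forall_extremePoints hCc hCv fun η hη ↦ ?_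
  by_cases hηξ : η ∈ ball ξ r
  · rw [mem_singleton_iff.mp (hiso ⟨hη, hηξ⟩), sub_self, inner_zero_left]
  have hηA : η ∈ convexHull ℝ (C \ ball ξ r) :=
    subset_convexHull ℝ _ ⟨extremePoints_subset hη, hηξ⟩
  have hηR : ‖η - ξ‖ ≤ R := mem_closedBall_iff_norm.mp (hR (extremePoints_subset hη))
  calc ⟪η - ξ, n⟫ = ⟪η - ξ, u⟫ + ⟪η - ξ, n - u⟫ := by rw [inner_sub_right]; ring
    _ ≤ -δ + ‖η - ξ‖ * ‖n - u‖ := add_le_add (huA η hηA) (real_inner_le_norm _ _)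
    _ ≤ -δ + R * ‖n - u‖ := by gcongr
    _ ≤ 0 := by linarith

theorem exists_ne_norm_eq_one_of_mem_nhds (hE : 1 < Module.rank ℝ E) {u : E} (hu : ‖u‖ = 1)
    {U : Set E} (hU : U ∈ 𝓝 u) : ∃ n ∈ U, ‖n‖ = 1 ∧ n ≠ u := by
  have hu' : u ∈ sphere (0 : E) 1 := mem_sphere_zero_iff_norm.mpr hu
  have hne : u ≠ -u := fun h ↦ ne_neg_of_mem_sphere ℝ one_ne_zero ⟨u, hu'⟩ (Subtype.ext h)
  have hperf := (isPreconnected_sphere hE 0 1).preperfect_of_nontrivial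
    ⟨u, hu', -u, mem_sphere_zero_iff_norm.mpr (by rw [norm_neg, hu]), hne⟩
  obtain ⟨n, ⟨hnU, hn⟩, hnu⟩ := preperfect_iff_nhds.mp hperf u hu' U hU
  exact ⟨n, hnU, by simpa using hn, hnu⟩

end InnerProductSpace

/-- The set `Ext C \ closure(Sing C)` has no isolated points. -/
theorem stmt4 (C : Set E3) (hC : IsConvexBody C)
    (ξ : E3) (hξ : ξ ∈ Set.extremePoints ℝ C \ closure (SingPts C))
    (ε : ℝ) (hε : 0 < ε) :
    ∃ η ∈ Set.extremePoints ℝ C \ closure (SingPts C),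
      η ∈ Metric.ball ξ ε ∧ η ≠ ξ := by
  obtain ⟨hext, hreg⟩ := hξ
  obtain ⟨ε₁, hε₁, hball⟩ := Metric.isOpen_iff.mp isClosed_closure.isOpen_compl ξ hreg
  by_contra! hiso
  have hExt : extremePoints ℝ C ∩ ball ξ (min ε ε₁) ⊆ {ξ} := fun η ⟨hη, hηr⟩ ↦
    hiso η ⟨hη, hball (ball_subset_ball (min_le_right _ _) hηr)⟩
      (ball_subset_ball (min_le_left _ _) hηr)
  obtain ⟨u, hu, hnormal⟩ :=
    exists_norm_eq_one_eventually_inner_sub_nonpos hC.1 hC.2.1 hext (lt_min hε hε₁) hExt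
  obtain ⟨n, hn, hn1, hnu⟩ := exists_ne_norm_eq_one_of_mem_nhds
    (by rw [← Module.finrank_eq_rank, finrank_euclideanSpace_fin]; norm_num) hu hnormal
  have hfront : ξ ∈ frontier C :=
    ⟨subset_closure (extremePoints_subset hext),
      fun h ↦ (disjoint_interior_extremePoints C).ne_of_mem h hext rfl⟩
  exact hreg (subset_closure ⟨hfront, u, n, hnu.symm, ⟨hu, hnormal.self_of_nhds⟩, ⟨hn1, hn⟩⟩)
end
end

section
/- Let C ⊂ ℝ³ be a convex body and let {O₁, O₂, …} be a finite or countable set of points lying outside C such that for all i ≠ j the open segment (O_i, O_j) intersects C. Let C̃ = Conv(C ∪ {O₁, O₂, …}). Then C̃ = ⋃_i Conv(C ∪ {O_i}). -/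
/-!
If `p ∈ [a, b]` lies in `conv s`, then splitting `[a, b] = [a, p] ∪ [p, b]` splits
`conv (s ∪ {a, b})` into `conv (s ∪ {a, p}) ∪ conv (s ∪ {p, b})`, and these are just
`conv (s ∪ {a})` and `conv (s ∪ {b})` since `p` is already in `conv s`. Hence the segment
between a point of `conv (s ∪ {O i})` and one of `conv (s ∪ {O j})` stays in
`⋃ k, conv (s ∪ {O k})`, so this union is convex and equals `conv (s ∪ {O₁, O₂, …})`.
-/

open Set Metric

noncomputable section

section

variable {𝕜 E : Type*} [Field 𝕜] [LinearOrder 𝕜] [IsStrictOrderedRing 𝕜]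
  [AddCommGroup E] [Module 𝕜 E]

theorem segment_subset_segment_union_segment {x y z : E} (hz : z ∈ segment 𝕜 x y) :
    segment 𝕜 x y ⊆ segment 𝕜 x z ∪ segment 𝕜 z y := by
  have hz' : z ∈ range (AffineMap.lineMap x y : 𝕜 → E) := by
    rw [segment_eq_image_lineMap] at hz
    exact image_subset_range _ _ hz
  rw [← insert_endpoints_openSegment]
  rintro w (rfl | rfl | hw)
  · exact .inl (left_mem_segment 𝕜 _ _)
  · exact .inr (right_mem_segment 𝕜 _ _)
  · rcases openSegment_subset_union x y hz' hw with rfl | hw | hw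
    · exact .inl (right_mem_segment 𝕜 _ _)
    · exact .inl (openSegment_subset_segment 𝕜 _ _ hw)
    · exact .inr (openSegment_subset_segment 𝕜 _ _ hw)

theorem convexHull_insert_insert_subset_union {a b p : E} {s : Set E}
    (hp : p ∈ segment 𝕜 a b) (hps : p ∈ convexHull 𝕜 s) :
    convexHull 𝕜 (insert a (insert b s)) ⊆
      convexHull 𝕜 (insert a s) ∪ convexHull 𝕜 (insert b s) := by
  have hs : s.Nonempty := convexHull_nonempty_iff.1 ⟨p, hps⟩
  have hjoin : ∀ c, convexJoin 𝕜 (segment 𝕜 c p) (convexHull 𝕜 s) ⊆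
      convexHull 𝕜 (insert c s) := by
    intro c
    rw [← convexHull_pair, ← convexHull_union (insert_nonempty _ _) hs]
    refine convexHull_min ?_ (convex_convexHull 𝕜 _)
    rintro q ((rfl | rfl) | hq)
    · exact subset_convexHull 𝕜 _ (mem_insert _ _)
    · exact convexHull_mono (subset_insert _ _) hps
    · exact subset_convexHull 𝕜 _ (mem_insert_of_mem _ hq)
  calc convexHull 𝕜 (insert a (insert b s))
      = convexJoin 𝕜 (segment 𝕜 a b) (convexHull 𝕜 s) := by
        rw [← convexHull_pair, ← convexHull_union (insert_nonempty _ _) hs, insert_union,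
          singleton_union]
    _ ⊆ convexJoin 𝕜 (segment 𝕜 a p ∪ segment 𝕜 b p) (convexHull 𝕜 s) := by
        rw [segment_symm 𝕜 b p]
        exact convexJoin_mono_left (segment_subset_segment_union_segment hp)
    _ ⊆ convexHull 𝕜 (insert a s) ∪ convexHull 𝕜 (insert b s) := by
        rw [convexJoin_union_left]
        exact union_subset_union (hjoin a) (hjoin b)

theorem convex_iUnion_convexHull_insert {ι : Type*} {s : Set E} {O : ι → E}
    (hO : ∀ i j, i ≠ j → ∃ p ∈ segment 𝕜 (O i) (O j), p ∈ convexHull 𝕜 s) :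
    Convex 𝕜 (⋃ i, convexHull 𝕜 (insert (O i) s)) := by
  refine convex_iff_segment_subset.2 fun x hx y hy => ?_
  obtain ⟨i, hxi⟩ := mem_iUnion.1 hx
  obtain ⟨j, hyj⟩ := mem_iUnion.1 hy
  obtain rfl | hij := eq_or_ne i j
  · exact ((convex_convexHull 𝕜 _).segment_subset hxi hyj).trans
      (subset_iUnion_of_subset i le_rfl)
  obtain ⟨p, hp, hps⟩ := hO i j hij
  have hpair : convexHull 𝕜 (insert (O i) (insert (O j) s)) ⊆
      ⋃ k, convexHull 𝕜 (insert (O k) s) :=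
    (convexHull_insert_insert_subset_union hp hps).trans
      (union_subset (subset_iUnion_of_subset i le_rfl) (subset_iUnion_of_subset j le_rfl))
  refine (convex_convexHull 𝕜 _).segment_subset ?_ ?_ |>.trans hpair
  · exact convexHull_mono (insert_subset_insert (subset_insert _ _)) hxi
  · exact convexHull_mono (subset_insert _ _) hyj

theorem convexHull_union_range_eq_iUnion {ι : Type*} [Nonempty ι] {s : Set E} {O : ι → E}
    (hO : ∀ i j, i ≠ j → ∃ p ∈ segment 𝕜 (O i) (O j), p ∈ convexHull 𝕜 s) :
    convexHull 𝕜 (s ∪ range O) = ⋃ i, convexHull 𝕜 (insert (O i) s) := by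
  refine (convexHull_min ?_ (convex_iUnion_convexHull_insert hO)).antisymm
    (iUnion_subset fun i => convexHull_mono ?_)
  · rintro x (hx | ⟨i, rfl⟩)
    · exact mem_iUnion.2
        ⟨Classical.arbitrary ι, subset_convexHull 𝕜 _ (mem_insert_of_mem _ hx)⟩
    · exact mem_iUnion.2 ⟨i, subset_convexHull 𝕜 _ (mem_insert _ _)⟩
  · exact insert_subset (.inr (mem_range_self i)) subset_union_left

end

theorem stmt6_general {ι : Type} [Nonempty ι]
    (C : Set E3)
    (O : ι → E3)
    (hseg : ∀ i j, i ≠ j → (openSegment ℝ (O i) (O j) ∩ C).Nonempty) :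
    convexHull ℝ (C ∪ Set.range O) = ⋃ i, convexHull ℝ (C ∪ {O i}) := by
  simp_rw [union_singleton]
  refine convexHull_union_range_eq_iUnion fun i j hij => ?_
  obtain ⟨p, hp, hpC⟩ := hseg i j hij
  exact ⟨p, openSegment_subset_segment ℝ _ _ hp, subset_convexHull ℝ C hpC⟩

/-- If `{O_i}` is a (nonempty) finite or countable set of points outside the convex body `C`
such that each open segment `(O_i, O_j)` (for `i ≠ j`) meets `C`, then
`Conv(C ∪ {O₁, O₂, …}) = ⋃_i Conv(C ∪ {O_i})`. -/
theorem stmt6 {ι : Type} [Countable ι] [Nonempty ι]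
    (C : Set E3) (hC : IsConvexBody C)
    (O : ι → E3) (hO : ∀ i, O i ∉ C)
    (hseg : ∀ i j, i ≠ j → (openSegment ℝ (O i) (O j) ∩ C).Nonempty) :
    convexHull ℝ (C ∪ Set.range O) = ⋃ i, convexHull ℝ (C ∪ {O i}) :=
  stmt6_general C O hseg
end
end

section
/- Let C ⊂ ℝ³ be a convex body and let O₁, …, O_m be finitely many points lying outside C such that for all i ≠ j the open segment (O_i, O_j) intersects C. Let C̃ = Conv(C ∪ {O₁, …, O_m}). Suppose ξ ∈ Ext C \ closure(Sing C) and for every i the open segment (O_i, ξ) intersects C. Then ξ ∈ Ext C̃ \ closure(Sing C̃). -/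
open Set Metric

noncomputable section

/-!
Since every segment `(O i, O j)` meets `C`, every point of `C̃ \ C` lies on a segment `[c, O i]`
with `c ∈ C`. As `(O i, ξ)` meets `C`, the segment from `ξ` towards any point of `C̃` starts inside
`C`, so `ξ` stays extreme in `C̃`. An outward normal to `C̃` at a point of `[c, O i)` is an outward
normal to `C` at `c`; hence singular points of `C̃` near `ξ` produce singular points `c` of `C`,
and by compactness and the extremality of `ξ` in `C̃` these `c` are close to `ξ`.
-/

open AffineMap Filter Topology

section Convexity

variable {𝕜 E : Type*} [Field 𝕜] [LinearOrder 𝕜] [IsStrictOrderedRing 𝕜]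
  [AddCommGroup E] [Module 𝕜 E]

theorem segment_subset_segment_union_segment_s7 {a b q : E} (hq : q ∈ segment 𝕜 a b) :
    segment 𝕜 a b ⊆ segment 𝕜 a q ∪ segment 𝕜 q b := by
  intro x hx
  have hxab := mem_segment_iff_wbtw.1 hx
  rw [segment_eq_image_lineMap] at hq hx
  obtain ⟨t, ht, rfl⟩ := hq
  obtain ⟨s, hs, rfl⟩ := hx
  simp only [mem_union, mem_segment_iff_wbtw]
  rw [lineMap_apply] at hxab ⊢
  rcases wbtw_or_wbtw_smul_vadd_of_nonneg a (b -ᵥ a) hs.1 ht.1 with h | h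
  · exact Or.inl h
  · exact Or.inr (hxab.trans_left_right h)

theorem convexJoin_convexJoin_singleton_subset {C : Set E} (hC : Convex 𝕜 C) {p q : E}
    (hpq : (segment 𝕜 p q ∩ C).Nonempty) :
    convexJoin 𝕜 (convexJoin 𝕜 C {p}) {q} ⊆ convexJoin 𝕜 C {p} ∪ convexJoin 𝕜 C {q} := by
  obtain ⟨r, hr, hrC⟩ := hpq
  -- split `[p, q]` at `r ∈ C`; joining `C` with `r` stays inside `C`
  have hjoin : ∀ s, convexJoin 𝕜 C (segment 𝕜 r s) ⊆ convexJoin 𝕜 C {s} := fun s => by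
    rw [← convexJoin_singletons, ← convexJoin_assoc]
    exact convexJoin_mono_left (convexJoin_subset subset_rfl (singleton_subset_iff.2 hrC) hC)
  rw [convexJoin_assoc, convexJoin_singletons]
  refine (convexJoin_mono_right (segment_subset_segment_union_segment_s7 hr)).trans ?_
  rw [convexJoin_union_right, segment_symm 𝕜 p r]
  exact union_subset_union (hjoin p) (hjoin q)

theorem convexHull_union_subset_union_convexJoin {C P : Set E} (hC : Convex 𝕜 C)
    (hCne : C.Nonempty) (hP : P.Finite)
    (hPC : ∀ p ∈ P, ∀ q ∈ P, p ≠ q → (segment 𝕜 p q ∩ C).Nonempty) :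
    convexHull 𝕜 (C ∪ P) ⊆ C ∪ ⋃ p ∈ P, convexJoin 𝕜 C {p} := by
  induction P, hP using Set.Finite.induction_on with
  | empty => simp [hC.convexHull_eq]
  | @insert p P hpP _ ih =>
    have ih := ih fun q hq r hr => hPC q (mem_insert_of_mem p hq) r (mem_insert_of_mem p hr)
    rw [union_insert, convexHull_insert (hCne.mono subset_union_left), convexJoin_comm]
    intro x hx
    obtain ⟨y, hy, p', hp', hxy⟩ := mem_convexJoin.1 hx
    rw [mem_singleton_iff.1 hp'] at hxy
    simp only [mem_union, mem_iUnion, mem_insert_iff, exists_prop, exists_eq_or_imp]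
    rcases ih hy with hyC | hyU
    · exact Or.inr (Or.inl (mem_convexJoin.2 ⟨y, hyC, p, rfl, hxy⟩))
    · obtain ⟨q, hqP, hyq⟩ := mem_iUnion₂.1 hyU
      have hpq : p ≠ q := fun h => hpP (h ▸ hqP)
      rcases convexJoin_convexJoin_singleton_subset hC
          (hPC q (mem_insert_of_mem p hqP) p (mem_insert p P) hpq.symm)
          (mem_convexJoin.2 ⟨y, hyq, p, rfl, hxy⟩) with h | h
      · exact Or.inr (Or.inr ⟨q, hqP, h⟩)
      · exact Or.inr (Or.inl h)

theorem exists_lineMap_mem_segment_of_mem_openSegment {ξ o p c x : E}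
    (hp : p ∈ openSegment 𝕜 o ξ) (hx : x ∈ segment 𝕜 c o) :
    ∃ μ ∈ Ioc (0 : 𝕜) 1, lineMap ξ x μ ∈ segment 𝕜 p c := by
  obtain ⟨s, t, hs, ht, hst, rfl⟩ := hp
  obtain ⟨a, b, ha, hb, hab, rfl⟩ := hx
  obtain rfl : t = 1 - s := by linarith
  obtain rfl : a = 1 - b := by linarith
  -- solve `lineMap ξ x μ = α • p + β • c` for `μ, α, β`
  have hD : 0 < (1 - b) * s + b := by nlinarith
  refine ⟨s / ((1 - b) * s + b), ⟨div_pos hs hD, (div_le_one hD).2 (by nlinarith)⟩,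
    b / ((1 - b) * s + b), (1 - b) * s / ((1 - b) * s + b), by positivity, by positivity,
    by field_simp; ring, ?_⟩
  rw [lineMap_apply_module]
  match_scalars <;> field_simp
  ring

theorem mem_extremePoints_of_forall_lineMap_mem {C D : Set E} {ξ : E}
    (hξ : ξ ∈ extremePoints 𝕜 C) (hCD : C ⊆ D)
    (h : ∀ x ∈ D, ∃ μ ∈ Ioc (0 : 𝕜) 1, lineMap ξ x μ ∈ C) : ξ ∈ extremePoints 𝕜 D := by
  rw [mem_extremePoints_iff_forall_segment] at hξ ⊢
  refine ⟨hCD hξ.1, fun x₁ hx₁ x₂ hx₂ hξx => ?_⟩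
  obtain ⟨μ₁, hμ₁, hy₁⟩ := h x₁ hx₁
  obtain ⟨μ₂, hμ₂, hy₂⟩ := h x₂ hx₂
  have hw₁ : Wbtw 𝕜 ξ (lineMap ξ x₁ μ₁) x₁ := ⟨μ₁, Ioc_subset_Icc_self hμ₁, rfl⟩
  have hw₂ : Wbtw 𝕜 ξ (lineMap ξ x₂ μ₂) x₂ := ⟨μ₂, Ioc_subset_Icc_self hμ₂, rfl⟩
  -- pulling both endpoints towards `ξ` keeps `ξ` between them
  have hξy : Wbtw 𝕜 (lineMap ξ x₂ μ₂) ξ (lineMap ξ x₁ μ₁) :=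
    ((mem_segment_iff_wbtw.1 hξx).trans_left_right hw₁.symm).symm.trans_left_right hw₂.symm
  rcases hξ.2 _ hy₂ _ hy₁ hξy.mem_segment with h | h <;>
    simp only [lineMap_eq_left_iff, hμ₁.1.ne', hμ₂.1.ne', or_false] at h
  · exact Or.inr h.symm
  · exact Or.inl h.symm

theorem forall_exists_lineMap_mem_of_subset_union_convexJoin {ι : Type*} {C D : Set E}
    {O : ι → E} {ξ : E} (hC : Convex 𝕜 C) (hDC : D ⊆ C ∪ ⋃ i, convexJoin 𝕜 C {O i})
    (hξ : ∀ i, (openSegment 𝕜 (O i) ξ ∩ C).Nonempty) :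
    ∀ x ∈ D, ∃ μ ∈ Ioc (0 : 𝕜) 1, lineMap ξ x μ ∈ C := by
  intro x hx
  rcases hDC hx with hxC | hxU
  · exact ⟨1, ⟨zero_lt_one, le_rfl⟩, by rwa [lineMap_apply_one]⟩
  · obtain ⟨i, hxi⟩ := mem_iUnion.1 hxU
    obtain ⟨c, hc, o, ho, hxs⟩ := mem_convexJoin.1 hxi
    rw [mem_singleton_iff.1 ho] at hxs
    obtain ⟨p, hp, hpC⟩ := hξ i
    obtain ⟨μ, hμ, hy⟩ := exists_lineMap_mem_segment_of_mem_openSegment hp hxs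
    exact ⟨μ, hμ, hC.segment_subset hpC hc hy⟩

theorem eq_and_lt_one_of_lineMap_eq_of_mem_extremePoints {D : Set E} {c o ξ : E} {a : 𝕜}
    (hξ : ξ ∈ extremePoints 𝕜 D) (hc : c ∈ D) (ho : o ∈ D) (hoξ : o ≠ ξ) (ha : a ∈ Icc 0 1)
    (h : lineMap c o a = ξ) : c = ξ ∧ a < 1 := by
  refine ⟨?_, ha.2.lt_of_ne ?_⟩
  · have hseg : ξ ∈ segment 𝕜 c o := by rw [segment_eq_image_lineMap]; exact ⟨a, ha, h⟩
    exact ((mem_extremePoints_iff_forall_segment.1 hξ).2 c hc o ho hseg).resolve_right hoξ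
  · rintro rfl
    exact hoξ (by rwa [lineMap_apply_one] at h)

theorem convexJoin_singleton_right_eq_image (C : Set E) (o : E) :
    convexJoin 𝕜 C {o} = (fun q : 𝕜 × E => lineMap q.2 o q.1) '' (Icc 0 1 ×ˢ C) := by
  ext x
  simp only [convexJoin_singleton_right, segment_eq_image_lineMap, mem_iUnion, mem_image,
    mem_prod, Prod.exists, exists_prop]
  grind

end Convexity

theorem IsCompact.convexJoin_singleton_right {E : Type*} [AddCommGroup E] [Module ℝ E]
    [TopologicalSpace E] [IsTopologicalAddGroup E] [ContinuousSMul ℝ E] {C : Set E}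
    (hC : IsCompact C) (o : E) : IsCompact (convexJoin ℝ C {o}) := by
  rw [convexJoin_singleton_right_eq_image]
  exact (isCompact_Icc.prod hC).image (by simp only [lineMap_apply_module]; fun_prop)

theorem IsCompact.eventually_forall_of_fiber_subset {X Y : Type*} [TopologicalSpace X]
    [TopologicalSpace Y] [T2Space Y] {K U : Set X} {f : X → Y} {y : Y} (hK : IsCompact K)
    (hf : ContinuousOn f K) (hU : IsOpen U) (h : ∀ x ∈ K, f x = y → x ∈ U) :
    ∀ᶠ z in 𝓝 y, ∀ x ∈ K, f x = z → x ∈ U := by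
  have hy : y ∉ f '' (K \ U) := by
    rintro ⟨x, ⟨hxK, hxU⟩, hxy⟩
    exact hxU (h x hxK hxy)
  filter_upwards [((hK.diff hU).image_of_continuousOn (hf.mono sdiff_subset)).isClosed
    |>.compl_mem_nhds hy] with z hz x hxK hxz
  by_contra hxU
  exact hz ⟨x, ⟨hxK, hxU⟩, hxz⟩

theorem IsOutwardNormal.mono {C D : Set E3} {z n : E3} (hCD : C ⊆ D)
    (h : IsOutwardNormal D z n) : IsOutwardNormal C z n :=
  ⟨h.1, fun x hx => h.2 x (hCD hx)⟩

theorem IsOutwardNormal.of_lineMap {D : Set E3} {c o n : E3} {a : ℝ} (ha : a ∈ Ico 0 1)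
    (ho : o ∈ D) (h : IsOutwardNormal D (lineMap c o a) n) : IsOutwardNormal D c n := by
  refine ⟨h.1, fun x hx => ?_⟩
  have ho' := h.2 o ho
  have hx' := h.2 x hx
  rw [lineMap_apply_module', show o - (a • (o - c) + c) = (1 - a) • (o - c) by module,
    real_inner_smul_left] at ho'
  rw [lineMap_apply_module', show x - (a • (o - c) + c) = (x - c) - a • (o - c) by module,
    inner_sub_left, real_inner_smul_left] at hx'
  have hoc : inner ℝ (o - c) n ≤ 0 := by nlinarith [ha.2]
  nlinarith [ha.1]

theorem IsOutwardNormal.notMem_interior {C : Set E3} {z n : E3} (h : IsOutwardNormal C z n) :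
    z ∉ interior C := by
  intro hz
  obtain ⟨r, hr, hball⟩ := Metric.isOpen_iff.1 isOpen_interior z hz
  have hmem : z + (r / 2) • n ∈ C := by
    refine interior_subset (hball ?_)
    rw [mem_ball, dist_eq_norm, add_sub_cancel_left, norm_smul, Real.norm_eq_abs,
      abs_of_pos (half_pos hr), h.1, mul_one]
    exact half_lt_self hr
  have := h.2 _ hmem
  rw [add_sub_cancel_left, real_inner_smul_left, real_inner_self_eq_norm_sq, h.1] at this
  linarith

theorem mem_singPts_of_lineMap_mem_singPts {C D : Set E3} {c o : E3} {a : ℝ} (hCD : C ⊆ D)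
    (hc : c ∈ C) (ho : o ∈ D) (ha : a ∈ Ico 0 1) (h : lineMap c o a ∈ SingPts D) :
    c ∈ SingPts C := by
  obtain ⟨-, n₁, n₂, hn, h₁, h₂⟩ := h
  have h₁' := (h₁.of_lineMap ha ho).mono hCD
  exact ⟨⟨subset_closure hc, h₁'.notMem_interior⟩, n₁, n₂, hn, h₁',
    (h₂.of_lineMap ha ho).mono hCD⟩

theorem notMem_closure_singPts_of_subset_union_convexJoin {ι : Type*} [Finite ι]
    {C D : Set E3} {O : ι → E3} {ξ : E3} (hC : IsCompact C) (hD : IsClosed D) (hCD : C ⊆ D)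
    (hOD : ∀ i, O i ∈ D) (hDC : D ⊆ C ∪ ⋃ i, convexJoin ℝ C {O i})
    (hξ : ξ ∈ extremePoints ℝ D) (hOξ : ∀ i, O i ≠ ξ) (hξC : ξ ∉ closure (SingPts C)) :
    ξ ∉ closure (SingPts D) := by
  have hS : IsOpen (closure (SingPts C))ᶜ := isClosed_closure.isOpen_compl
  -- by extremality the fibre over `ξ` is `{(0, ξ)}`, so by compactness nearby fibres stay close
  have hfiber : ∀ i, ∀ᶠ z in 𝓝 ξ, ∀ q ∈ Icc (0 : ℝ) 1 ×ˢ C,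
      lineMap q.2 (O i) q.1 = z → q ∈ Iio 1 ×ˢ (closure (SingPts C))ᶜ := fun i =>
    (isCompact_Icc.prod hC).eventually_forall_of_fiber_subset
      (by simp only [lineMap_apply_module]; fun_prop) (isOpen_Iio.prod hS) fun q hq hqξ => by
        obtain ⟨hc, ha⟩ := eq_and_lt_one_of_lineMap_eq_of_mem_extremePoints hξ (hCD hq.2)
          (hOD i) (hOξ i) hq.1 hqξ
        exact ⟨ha, hc ▸ hξC⟩
  rw [mem_closure_iff_frequently, not_frequently]
  filter_upwards [eventually_all.2 hfiber, hS.mem_nhds hξC] with z hz hzC hzD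
  rcases hDC (hD.frontier_subset hzD.1) with hzC' | hzU
  · refine hzC (subset_closure (mem_singPts_of_lineMap_mem_singPts hCD hzC' (hCD hzC')
      ⟨le_rfl, zero_lt_one⟩ ?_))
    rwa [lineMap_apply_zero]
  · obtain ⟨i, hzi⟩ := mem_iUnion.1 hzU
    rw [convexJoin_singleton_right_eq_image] at hzi
    obtain ⟨q, hq, rfl⟩ := hzi
    obtain ⟨ha, hc⟩ := hz i q hq rfl
    exact hc (subset_closure
      (mem_singPts_of_lineMap_mem_singPts hCD hq.2 (hOD i) ⟨hq.1.1, ha⟩ hzD))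

/-- Let `O₁, …, O_m` be finitely many points outside the convex body `C` such that each open
segment `(O_i, O_j)` (for `i ≠ j`) meets `C`, and let `C̃ = Conv(C ∪ {O₁, …, O_m})`.
If `ξ ∈ Ext C \ closure(Sing C)` and every open segment `(O_i, ξ)` meets `C`, then
`ξ ∈ Ext C̃ \ closure(Sing C̃)`. -/
theorem stmt7 (m : ℕ) (C : Set E3) (hC : IsConvexBody C)
    (O : Fin m → E3) (hO : ∀ i, O i ∉ C)
    (hseg : ∀ i j, i ≠ j → (openSegment ℝ (O i) (O j) ∩ C).Nonempty)
    (ξ : E3) (hξ : ξ ∈ Set.extremePoints ℝ C \ closure (SingPts C))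
    (hξseg : ∀ i, (openSegment ℝ (O i) ξ ∩ C).Nonempty) :
    ξ ∈ Set.extremePoints ℝ (convexHull ℝ (C ∪ Set.range O)) \
        closure (SingPts (convexHull ℝ (C ∪ Set.range O))) := by
  obtain ⟨hCcomp, hCconv, -⟩ := hC
  obtain ⟨hξext, hξS⟩ := hξ
  set D := convexHull ℝ (C ∪ Set.range O)
  have hCD : C ⊆ D := subset_union_left.trans (subset_convexHull ℝ _)
  have hOD : ∀ i, O i ∈ D := fun i => subset_convexHull ℝ _ (Or.inr ⟨i, rfl⟩)
  have hDC : D ⊆ C ∪ ⋃ i, convexJoin ℝ C {O i} := by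
    rw [← biUnion_range (f := O) (g := fun p => convexJoin ℝ C {p})]
    refine convexHull_union_subset_union_convexJoin hCconv ⟨ξ, hξext.1⟩ (finite_range O) ?_
    rintro _ ⟨i, rfl⟩ _ ⟨j, rfl⟩ hij
    exact (hseg i j (ne_of_apply_ne O hij)).mono (inter_subset_inter_left C
      (openSegment_subset_segment ℝ _ _))
  have hDclosed : IsClosed D := by
    rw [hDC.antisymm (union_subset hCD (iUnion_subset fun i =>
      convexJoin_subset hCD (singleton_subset_iff.2 (hOD i)) (convex_convexHull ℝ _)))]
    exact (hCcomp.union (isCompact_iUnion fun i => hCcomp.convexJoin_singleton_right _)).isClosed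
  have hDext : ξ ∈ extremePoints ℝ D := mem_extremePoints_of_forall_lineMap_mem hξext hCD
    (forall_exists_lineMap_mem_of_subset_union_convexJoin hCconv hDC hξseg)
  exact ⟨hDext, notMem_closure_singPts_of_subset_union_convexJoin hCcomp hDclosed hCD hOD hDC
    hDext (fun i h => hO i (h ▸ hξext.1)) hξS⟩
end
end

section
/- Let C ⊂ ℝ³ be a convex body and let {O₁, O₂, …} be a finite or countable set of points lying outside C such that for all i ≠ j the open segment (O_i, O_j) intersects C. Let C̃ = Conv(C ∪ {O₁, O₂, …}). Then {O₁, O₂, …} ⊆ Ext C̃ ⊆ Ext C ∪ {O₁, O₂, …}. -/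
open Set Metric

noncomputable section

/-!
Separate `Oᵢ` from `C` by a hyperplane. Every other `Oⱼ` lies strictly on the side of `C`, since
the open segment `(Oⱼ, Oᵢ)` meets `C`; so `Oᵢ` is not in the convex hull of the remaining points,
which makes it extreme. An extreme point of a convex hull is one of the generating points, and if
it lies in `C` it is extreme in `C`.
-/

section ConvexHull

variable {𝕜 E : Type*} [Field 𝕜] [LinearOrder 𝕜] [IsStrictOrderedRing 𝕜]
  [AddCommGroup E] [Module 𝕜 E]

theorem extremePoints_convexHull_union_subset (A B : Set E) :
    (convexHull 𝕜 (A ∪ B)).extremePoints 𝕜 ⊆ A.extremePoints 𝕜 ∪ B := by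
  intro x hx
  rcases extremePoints_convexHull_subset hx with hxA | hxB
  · exact .inl <| inter_extremePoints_subset_extremePoints_of_subset
      (subset_union_left.trans (subset_convexHull 𝕜 _)) ⟨hxA, hx⟩
  · exact .inr hxB

theorem mem_extremePoints_convexHull_insert {x : E} {s : Set E} (hx : x ∉ convexHull 𝕜 s) :
    x ∈ (convexHull 𝕜 (insert x s)).extremePoints 𝕜 := by
  rcases s.eq_empty_or_nonempty with rfl | hs
  · simp
  rw [convexHull_insert hs, mem_extremePoints]
  refine ⟨mem_convexJoin.2 ⟨x, rfl, hs.some, subset_convexHull 𝕜 s hs.some_mem,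
    left_mem_segment 𝕜 _ _⟩, ?_⟩
  rintro x₁ hx₁ x₂ hx₂ ⟨a, b, ha, hb, hab, hx₁₂⟩
  obtain ⟨y₁, hy₁, t₁, ht₁, p₁, q₁, hp₁, hq₁, hpq₁, rfl⟩ := mem_convexJoin.1 hx₁
  obtain ⟨y₂, hy₂, t₂, ht₂, p₂, q₂, hp₂, hq₂, hpq₂, rfl⟩ := mem_convexJoin.1 hx₂
  rw [mem_singleton_iff] at hy₁ hy₂
  subst y₁ y₂
  -- Unless `q₁ = q₂ = 0`, this exhibits `x` as a convex combination of `t₁, t₂ ∈ conv s`.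
  have hrel : (a * q₁ + b * q₂) • x = (a * q₁) • t₁ + (b * q₂) • t₂ := by
    obtain rfl : p₁ = 1 - q₁ := by linarith
    obtain rfl : p₂ = 1 - q₂ := by linarith
    obtain rfl : a = 1 - b := by linarith
    linear_combination (norm := module) -hx₁₂
  rcases (by positivity : 0 ≤ a * q₁ + b * q₂).eq_or_lt with hμ | hμ
  · obtain rfl : q₁ = 0 := by nlinarith
    obtain rfl : q₂ = 0 := by nlinarith
    obtain rfl : p₁ = 1 := by linarith
    obtain rfl : p₂ = 1 := by linarith
    simp
  · refine absurd ?_ hx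
    convert (convex_convexHull 𝕜 s) ht₁ ht₂ (by positivity : 0 ≤ a * q₁ / (a * q₁ + b * q₂))
      (by positivity : 0 ≤ b * q₂ / (a * q₁ + b * q₂)) (by field_simp) using 1
    rw [← inv_smul_smul₀ hμ.ne' x, hrel, smul_add, smul_smul, smul_smul, div_eq_inv_mul,
      div_eq_inv_mul]

end ConvexHull

section Separation

variable {E : Type*} [TopologicalSpace E] [AddCommGroup E] [Module ℝ E]
  [IsTopologicalAddGroup E] [ContinuousSMul ℝ E] [LocallyConvexSpace ℝ E]

theorem notMem_convexHull_of_openSegment_inter_nonempty {C T : Set E} {x : E}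
    (hCconv : Convex ℝ C) (hCclosed : IsClosed C) (hx : x ∉ C)
    (hT : ∀ y ∈ T, y ∈ C ∨ (openSegment ℝ y x ∩ C).Nonempty) :
    x ∉ convexHull ℝ T := by
  obtain ⟨f, c, hfC, hfx⟩ := geometric_hahn_banach_closed_point hCconv hCclosed hx
  have hTf : T ⊆ {y | f y < c} := by
    intro y hy
    rcases hT y hy with hyC | ⟨p, hp, hpC⟩
    · exact hfC y hyC
    · show f y < c
      by_contra! hyc
      have hp_ge : c ≤ f p :=
        (convex_halfSpace_ge f.isLinear c).openSegment_subset hyc hfx.le hp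
      exact (hfC p hpC).not_ge hp_ge
  intro hxT
  exact hfx.not_gt (convexHull_min hTf (convex_halfSpace_lt f.isLinear c) hxT)

end Separation

theorem stmt8_general {ι : Type}
    (C : Set E3) (hC : IsConvexBody C)
    (O : ι → E3) (hO : ∀ i, O i ∉ C)
    (hseg : ∀ i j, i ≠ j → (openSegment ℝ (O i) (O j) ∩ C).Nonempty) :
    Set.range O ⊆ Set.extremePoints ℝ (convexHull ℝ (C ∪ Set.range O)) ∧
    Set.extremePoints ℝ (convexHull ℝ (C ∪ Set.range O)) ⊆
      Set.extremePoints ℝ C ∪ Set.range O := by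
  obtain ⟨hCcompact, hCconv, -⟩ := hC
  refine ⟨?_, extremePoints_convexHull_union_subset C (range O)⟩
  rintro _ ⟨i, rfl⟩
  have hOi : O i ∉ convexHull ℝ ((C ∪ range O) \ {O i}) := by
    refine notMem_convexHull_of_openSegment_inter_nonempty hCconv hCcompact.isClosed (hO i) ?_
    rintro _ ⟨hyC | ⟨j, rfl⟩, hji⟩
    · exact .inl hyC
    · exact .inr (hseg j i (ne_of_apply_ne O hji))
  simpa [insert_sdiff_singleton, insert_eq_of_mem (mem_union_right C (mem_range_self i))]
    using mem_extremePoints_convexHull_insert hOi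

/-- If `{O_i}` is a finite or countable set of points outside the convex body `C` such that
each open segment `(O_i, O_j)` (for `i ≠ j`) meets `C`, and `C̃ = Conv(C ∪ {O₁, O₂, …})`,
then `{O₁, O₂, …} ⊆ Ext C̃ ⊆ Ext C ∪ {O₁, O₂, …}`. -/
theorem stmt8 {ι : Type} [Countable ι]
    (C : Set E3) (hC : IsConvexBody C)
    (O : ι → E3) (hO : ∀ i, O i ∉ C)
    (hseg : ∀ i j, i ≠ j → (openSegment ℝ (O i) (O j) ∩ C).Nonempty) :
    Set.range O ⊆ Set.extremePoints ℝ (convexHull ℝ (C ∪ Set.range O)) ∧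
    Set.extremePoints ℝ (convexHull ℝ (C ∪ Set.range O)) ⊆
      Set.extremePoints ℝ C ∪ Set.range O :=
  stmt8_general C hC O hO hseg
end
end

section
/- Let C ⊂ ℝ³ be a convex body, let (O_i)_{i∈I} be a family of points lying outside C such that for all i ≠ j the open segment (O_i, O_j) intersects C, and let (s_i)_{i∈I} be a family of numbers in [0, 1]. For each i set C_i(s_i) = ⋃_{√(1−s_i) ≤ λ ≤ 1} (λ·C + (1−λ)·O_i), where λ·C + (1−λ)·O_i = {λx + (1−λ)O_i : x ∈ C}. Then the union ⋃_{i∈I} C_i(s_i) is a convex set. -/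
open Set Metric

noncomputable section

/-!
Write points of `C_i(s_i)` and `C_j(s_j)` as `p = λ x + (1 - λ) O_i` and `q = μ y + (1 - μ) O_j`
with `x, y ∈ C`, so that `u p + v q` puts weight `u (1 - λ)` on `O_i` and `v (1 - μ)` on `O_j`.
For `i ≠ j` take `c = σ O_i + τ O_j ∈ C`. The weight on `O_j` can be traded for a multiple of `c`
by paying with weight on `O_i`, or the other way round, and one of the two apexes can always
afford it. What is left is a nonnegative combination of points of `C`, hence by convexity a point
of one homothetic copy of `C` about the remaining apex, with a ratio no smaller than before.
-/
open scoped Pointwise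

section TruncatedCone

variable {E : Type*} [AddCommGroup E] [Module ℝ E] {C : Set E}

def truncatedCone (C : Set E) (O : E) (a : ℝ) : Set E :=
  ⋃ l ∈ Icc a 1, (fun x => l • x + (1 - l) • O) '' C

lemma mem_truncatedCone {O p : E} {a : ℝ} :
    p ∈ truncatedCone C O a ↔ ∃ l ∈ Icc a 1, ∃ x ∈ C, l • x + (1 - l) • O = p := by
  simp only [truncatedCone, mem_iUnion, mem_image, exists_prop]

lemma add_smul_mem_truncatedCone {O w : E} {a t : ℝ} (hw : w ∈ t • C) (hat : a ≤ t)
    (ht : t ≤ 1) : w + (1 - t) • O ∈ truncatedCone C O a := by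
  obtain ⟨x, hx, rfl⟩ := hw
  exact mem_truncatedCone.2 ⟨t, ⟨hat, ht⟩, x, hx, rfl⟩

lemma Convex.add_mem_add_smul (hC : Convex ℝ C) {a b : ℝ} (ha : 0 ≤ a) (hb : 0 ≤ b) {p q : E}
    (hp : p ∈ a • C) (hq : q ∈ b • C) : p + q ∈ (a + b) • C := by
  rw [hC.add_smul ha hb]
  exact add_mem_add hp hq

lemma Convex.truncatedCone (hC : Convex ℝ C) (O : E) {a : ℝ} (ha : 0 ≤ a) :
    Convex ℝ (truncatedCone C O a) := by
  intro p hp q hq u v hu hv huv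
  obtain ⟨l, ⟨hal, hl1⟩, x, hx, rfl⟩ := mem_truncatedCone.1 hp
  obtain ⟨m, ⟨ham, hm1⟩, y, hy, rfl⟩ := mem_truncatedCone.1 hq
  have hcombo : u • (l • x + (1 - l) • O) + v • (m • y + (1 - m) • O) =
      ((u * l) • x + (v * m) • y) + (1 - (u * l + v * m)) • O := by
    linear_combination (norm := module) huv • O
  rw [hcombo]
  refine add_smul_mem_truncatedCone (hC.add_mem_add_smul (by nlinarith) (by nlinarith)
    (smul_mem_smul_set hx) (smul_mem_smul_set hy)) ?_ (by nlinarith)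
  nlinarith

lemma combo_mem_truncatedCone_of_weight_le (hC : Convex ℝ C) {O O' c x y : E}
    {a σ τ l m u v : ℝ} (hc : σ • O + τ • O' = c) (hcC : c ∈ C) (hσ : 0 ≤ σ) (hτ : 0 < τ)
    (hστ : σ + τ = 1) (hx : x ∈ C) (hy : y ∈ C) (ha : 0 ≤ a) (hal : a ≤ l) (hl1 : l ≤ 1)
    (hm0 : 0 ≤ m) (hm1 : m ≤ 1) (hu : 0 ≤ u) (hv : 0 ≤ v) (huv : u + v = 1)
    (hweight : v * (1 - m) * σ ≤ u * (1 - l) * τ) :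
    u • (l • x + (1 - l) • O) + v • (m • y + (1 - m) • O') ∈ truncatedCone C O a := by
  -- `k • c` replaces the weight on `O'`, at the price of the weight `k * σ` on `O`
  obtain ⟨k, hkτ⟩ : ∃ k, k * τ = v * (1 - m) := ⟨_, div_mul_cancel₀ _ hτ.ne'⟩
  have hk0 : 0 ≤ k := by nlinarith
  have hcombo : u • (l • x + (1 - l) • O) + v • (m • y + (1 - m) • O') =
      ((u * l) • x + (v * m) • y + k • c) + (1 - (u * l + v * m + k)) • O := by
    rw [← hc]
    linear_combination (norm := module) huv • O + hkτ • (O - O') - (k • hστ) • O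
  rw [hcombo]
  have hC3 : (u * l) • x + (v * m) • y + k • c ∈ (u * l + v * m + k) • C :=
    hC.add_mem_add_smul (by nlinarith) hk0 (hC.add_mem_add_smul (by nlinarith) (by nlinarith)
      (smul_mem_smul_set hx) (smul_mem_smul_set hy)) (smul_mem_smul_set hcC)
  refine add_smul_mem_truncatedCone hC3 (by nlinarith) ?_
  have hkσ : k * σ ≤ u * (1 - l) := le_of_mul_le_mul_right (by nlinarith) hτ
  have hk : k * σ + k * τ = k := by rw [← mul_add, hστ, mul_one]
  linarith

theorem convex_iUnion_truncatedCone {ι : Type*} (hC : Convex ℝ C) {O : ι → E} {a : ι → ℝ}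
    (ha : ∀ i, 0 ≤ a i) (hseg : ∀ i j, i ≠ j → (openSegment ℝ (O i) (O j) ∩ C).Nonempty) :
    Convex ℝ (⋃ i, truncatedCone C (O i) (a i)) := by
  intro p hp q hq u v hu hv huv
  obtain ⟨i, hp⟩ := mem_iUnion.1 hp
  obtain ⟨j, hq⟩ := mem_iUnion.1 hq
  obtain rfl | hij := eq_or_ne i j
  · exact mem_iUnion_of_mem i (hC.truncatedCone (O i) (ha i) hp hq hu hv huv)
  obtain ⟨c, ⟨σ, τ, hσ, hτ, hστ, hc⟩, hcC⟩ := hseg i j hij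
  obtain ⟨l, ⟨hal, hl1⟩, x, hx, rfl⟩ := mem_truncatedCone.1 hp
  obtain ⟨m, ⟨ham, hm1⟩, y, hy, rfl⟩ := mem_truncatedCone.1 hq
  rcases le_total (v * (1 - m) * σ) (u * (1 - l) * τ) with hweight | hweight
  · exact mem_iUnion_of_mem i <| combo_mem_truncatedCone_of_weight_le hC hc hcC hσ.le hτ
      hστ hx hy (ha i) hal hl1 ((ha j).trans ham) hm1 hu hv huv hweight
  · rw [add_comm]
    exact mem_iUnion_of_mem j <| combo_mem_truncatedCone_of_weight_le hC
      ((add_comm _ _).trans hc) hcC hτ.le hσ ((add_comm _ _).trans hστ) hy hx (ha j) ham hm1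
      ((ha i).trans hal) hl1 hv hu ((add_comm _ _).trans huv) (by linarith)

end TruncatedCone

theorem stmt12_general {ι : Type} (C : Set E3) (hC : IsConvexBody C)
    (O : ι → E3)
    (hseg : ∀ i j, i ≠ j → (openSegment ℝ (O i) (O j) ∩ C).Nonempty)
    (s : ι → ℝ) :
    Convex ℝ (⋃ i, ⋃ l ∈ Set.Icc (Real.sqrt (1 - s i)) 1,
      (fun x => l • x + (1 - l) • O i) '' C) :=
  convex_iUnion_truncatedCone hC.2.1 (fun _ => Real.sqrt_nonneg _) hseg

/-- Let `(O_i)` be points outside the convex body `C` such that each open segment `(O_i, O_j)`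
(for `i ≠ j`) meets `C`, and let `s_i ∈ [0,1]`. Then the union of the sets
`C_i(s_i) = ⋃_{√(1−s_i) ≤ λ ≤ 1} (λ·C + (1−λ)·O_i)` is convex. -/
theorem stmt12 {ι : Type} (C : Set E3) (hC : IsConvexBody C)
    (O : ι → E3) (hO : ∀ i, O i ∉ C)
    (hseg : ∀ i j, i ≠ j → (openSegment ℝ (O i) (O j) ∩ C).Nonempty)
    (s : ι → ℝ) (hs : ∀ i, s i ∈ Set.Icc (0 : ℝ) 1) :
    Convex ℝ (⋃ i, ⋃ l ∈ Set.Icc (Real.sqrt (1 - s i)) 1,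
      (fun x => l • x + (1 - l) • O i) '' C) :=
  stmt12_general C hC O hseg s
end
end
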